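/- arXiv:0912.0488 — 4 statements merged into one kernel-verified Lean document; each statement's English description precedes it below -/
import Mathlib

section
/- Let U, H be real Hilbert spaces, U_ad ⊆ U closed convex nonempty, α > 0, z ∈ H. Let S, S_h : U → H be bounded linear operators (the continuous and discrete solution operators). Let u minimize J(v) = (1/2)‖S v − z‖² + (α/2)‖v‖² over U_ad, and let u_h minimize J_h(v) = (1/2)‖S_h v − z‖² + (α/2)‖v‖² over U_ad. Set p(u) = S*(S u − z), p̃_h(u) = S_h*(S u − z), y(u) = S u, y_h(u) = S_h u, y_h = S_h u_h. Then α‖u − u_h‖² + (1/2)‖y(u) − y_h‖² ≤ ⟨p(u) − p̃_h(u), u_h − u⟩ + (1/2)‖y(u) − y_h(u)‖². -/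
/-!
Both minimizers satisfy the first-order condition
`0 ≤ ⟪T u - z, T (v - u)⟫ + α ⟪u, v - u⟫` on the convex set. Testing the condition for `u` with
`u_h` and the one for `u_h` with `u` and adding them leaves `α ‖u - u_h‖²` bounded by the adjoint
term plus `⟪S u - S_h u_h, S_h u_h - S_h u⟫`, which Young's inequality turns into
`(‖S u - S_h u‖² - ‖S u - S_h u_h‖²) / 2`.
-/

open RealInnerProductSpace

section TrackingCost

variable {U H : Type*} [NormedAddCommGroup U] [InnerProductSpace ℝ U]
  [NormedAddCommGroup H] [InnerProductSpace ℝ H]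

noncomputable def trackingCost (T : U →L[ℝ] H) (z : H) (α : ℝ) (v : U) : ℝ :=
  (1 / 2) * ‖T v - z‖ ^ 2 + (α / 2) * ‖v‖ ^ 2

theorem hasFDerivAt_trackingCost (T : U →L[ℝ] H) (z : H) (α : ℝ) (u : U) :
    HasFDerivAt (trackingCost T z α)
      ((innerSL ℝ (T u - z)).comp T + α • innerSL ℝ u) u := by
  have hT : HasFDerivAt (fun v => T v - z) T u := T.hasFDerivAt.sub_const z
  refine ((hT.norm_sq.const_mul (1 / 2)).add
    ((hasFDerivAt_id u).norm_sq.const_mul (α / 2))).congr_fderiv ?_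
  ext w
  simp [← mul_assoc]

theorem IsMinOn.trackingCost_inner_nonneg {T : U →L[ℝ] H} {z : H} {α : ℝ} {C : Set U}
    {u v : U} (hmin : IsMinOn (trackingCost T z α) C u) (hC : Convex ℝ C)
    (hu : u ∈ C) (hv : v ∈ C) :
    0 ≤ ⟪T u - z, T (v - u)⟫ + α * ⟪u, v - u⟫ := by
  have hcone : v - u ∈ posTangentConeAt C u :=
    mem_posTangentConeAt_of_segment_subset (by simpa using hC.segment_subset hu hv)
  simpa [inner_sub_left] using hmin.localize.hasFDerivWithinAt_nonneg
    (hasFDerivAt_trackingCost T z α u).hasFDerivWithinAt hcone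

end TrackingCost

theorem real_inner_sub_self_le {E : Type*} [NormedAddCommGroup E] [InnerProductSpace ℝ E]
    (a c : E) : ⟪a, c - a⟫ ≤ (‖c‖ ^ 2 - ‖a‖ ^ 2) / 2 := by
  have := norm_sub_sq_real c a
  rw [inner_sub_right, real_inner_self_eq_norm_sq, real_inner_comm]
  nlinarith [sq_nonneg ‖c - a‖]

theorem stmt2_general
    {U H : Type*} [NormedAddCommGroup U] [InnerProductSpace ℝ U] [CompleteSpace U]
    [NormedAddCommGroup H] [InnerProductSpace ℝ H] [CompleteSpace H]
    (C : Set U) (hCcv : Convex ℝ C)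
    (α : ℝ) (S Sh : U →L[ℝ] H) (z : H)
    (u : U) (hu : u ∈ C)
    (hmin : ∀ v ∈ C,
      (1 / 2) * ‖S u - z‖ ^ 2 + (α / 2) * ‖u‖ ^ 2 ≤
        (1 / 2) * ‖S v - z‖ ^ 2 + (α / 2) * ‖v‖ ^ 2)
    (uh : U) (huh : uh ∈ C)
    (hminh : ∀ v ∈ C,
      (1 / 2) * ‖Sh uh - z‖ ^ 2 + (α / 2) * ‖uh‖ ^ 2 ≤
        (1 / 2) * ‖Sh v - z‖ ^ 2 + (α / 2) * ‖v‖ ^ 2) :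
    α * ‖u - uh‖ ^ 2 + (1 / 2) * ‖S u - Sh uh‖ ^ 2 ≤
      ⟪S.adjoint (S u - z) - Sh.adjoint (S u - z), uh - u⟫ +
        (1 / 2) * ‖S u - Sh u‖ ^ 2 := by
  have hS := (isMinOn_iff.2 hmin : IsMinOn (trackingCost S z α) C u).trackingCost_inner_nonneg
    hCcv hu huh
  have hSh :=
    (isMinOn_iff.2 hminh : IsMinOn (trackingCost Sh z α) C uh).trackingCost_inner_nonneg
      hCcv huh hu
  calc α * ‖u - uh‖ ^ 2 + (1 / 2) * ‖S u - Sh uh‖ ^ 2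
      ≤ (⟪S u - z, S (uh - u)⟫ + α * ⟪u, uh - u⟫)
          + (⟪Sh uh - z, Sh (u - uh)⟫ + α * ⟪uh, u - uh⟫)
          + α * ‖u - uh‖ ^ 2 + (1 / 2) * ‖S u - Sh uh‖ ^ 2 := by linarith
    _ = ⟪S.adjoint (S u - z) - Sh.adjoint (S u - z), uh - u⟫
          + ⟪S u - Sh uh, (S u - Sh u) - (S u - Sh uh)⟫ + (1 / 2) * ‖S u - Sh uh‖ ^ 2 := by
      simp only [inner_sub_left, ContinuousLinearMap.adjoint_inner_left, map_sub, inner_sub_right,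
        ← real_inner_self_eq_norm_sq, real_inner_comm]
      ring
    _ ≤ _ := by linarith [real_inner_sub_self_le (S u - Sh uh) (S u - Sh u)]

/-- Main error estimate for variational discretization (Theorem 2.3). -/
theorem stmt2
    {U H : Type*} [NormedAddCommGroup U] [InnerProductSpace ℝ U] [CompleteSpace U]
    [NormedAddCommGroup H] [InnerProductSpace ℝ H] [CompleteSpace H]
    (C : Set U) (hCne : C.Nonempty) (hCcl : IsClosed C) (hCcv : Convex ℝ C)
    (α : ℝ) (hα : 0 < α) (S Sh : U →L[ℝ] H) (z : H)
    (u : U) (hu : u ∈ C)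
    (hmin : ∀ v ∈ C,
      (1 / 2) * ‖S u - z‖ ^ 2 + (α / 2) * ‖u‖ ^ 2 ≤
        (1 / 2) * ‖S v - z‖ ^ 2 + (α / 2) * ‖v‖ ^ 2)
    (uh : U) (huh : uh ∈ C)
    (hminh : ∀ v ∈ C,
      (1 / 2) * ‖Sh uh - z‖ ^ 2 + (α / 2) * ‖uh‖ ^ 2 ≤
        (1 / 2) * ‖Sh v - z‖ ^ 2 + (α / 2) * ‖v‖ ^ 2) :
    α * ‖u - uh‖ ^ 2 + (1 / 2) * ‖S u - Sh uh‖ ^ 2 ≤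
      ⟪S.adjoint (S u - z) - Sh.adjoint (S u - z), uh - u⟫ +
        (1 / 2) * ‖S u - Sh u‖ ^ 2 :=
  stmt2_general C hCcv α S Sh z u hu hmin uh huh hminh
end

section
/- Let U be a real Hilbert space of functions (e.g. L²(Ω)), α > 0, S_h : U → H bounded linear, z ∈ H. Let a, b, a_h, b_h ∈ L^∞(Ω) with a ≤ b and a_h ≤ b_h pointwise. Let u_h be the unique minimizer of (1/2)‖S_h v − z‖² + (α/2)‖v‖² over {a ≤ v ≤ b} and u_hh the unique minimizer over {a_h ≤ v ≤ b_h}. Then ‖u_hh − u_h‖_{L²} ≤ (1 + ‖S_h‖²/α) (‖a − a_h‖_{L²} + ‖b − b_h‖_{L²}). -/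
open RealInnerProductSpace MeasureTheory

/-!
Both minimizers satisfy first-order variational inequalities. With
`q = -(1/α) S_h* (S_h u_h - z)`, the inequality for `u_h` says that `u_h` is the pointwise clamp
of `q` to `[a, b]`. Clamping `q` to `[a_h, b_h]` instead gives `p` with
`‖p - u_h‖ ≤ ‖a - a_h‖ + ‖b - b_h‖`, since clamping is 1-Lipschitz in the bounds. Adding the
inequality for `u_hh` tested at `p` to the projection inequality for `p` tested at `u_hh` gives
`α ‖u_hh - p‖ ≤ ‖S_h‖² ‖p - u_h‖`, and the triangle inequality finishes.
-/

section Lattice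

variable {α : Type*}

theorem sup_inf_mem_Icc [Lattice α] {a b : α} (hab : a ≤ b) (x : α) :
    a ⊔ (b ⊓ x) ∈ Set.Icc a b :=
  ⟨le_sup_left, sup_le hab inf_le_left⟩

theorem norm_sup_inf_sub_sup_inf_le [NormedAddCommGroup α] [Lattice α] [HasSolidNorm α]
    [IsOrderedAddMonoid α] (a b c d x : α) :
    ‖a ⊔ (b ⊓ x) - c ⊔ (d ⊓ x)‖ ≤ ‖a - c‖ + ‖b - d‖ :=
  (norm_sup_sub_sup_le_add_norm _ _ _ _).trans (by gcongr; exact norm_inf_sub_inf_le_norm _ _ _)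

end Lattice

namespace MeasureTheory.Lp

variable {Ω E : Type*} [MeasurableSpace Ω] {μ : Measure Ω} {p : ENNReal} [NormedAddCommGroup E]

theorem mem_Icc_iff_ae [PartialOrder E] {a b f : Lp E p μ} :
    f ∈ Set.Icc a b ↔ ∀ᵐ ω ∂μ, a ω ≤ f ω ∧ f ω ≤ b ω := by
  rw [Set.mem_Icc, ← coeFn_le, ← coeFn_le]
  exact Filter.eventually_and.symm

instance instPosSMulMono [PartialOrder E] [IsOrderedAddMonoid E] [NormedSpace ℝ E]
    [PosSMulMono ℝ E] : PosSMulMono ℝ (Lp E p μ) :=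
  PosSMulMono.of_smul_nonneg fun c hc f hf => by
    rw [← coeFn_nonneg] at hf ⊢
    filter_upwards [hf, coeFn_smul c f] with ω hfω hcf
    rw [hcf, Pi.smul_apply]
    exact smul_nonneg hc hfω

end MeasureTheory.Lp

theorem mul_sub_max_min_nonneg {a b x v : ℝ} (hv : v ∈ Set.Icc a b) :
    0 ≤ (max a (min b x) - x) * (v - max a (min b x)) := by
  obtain ⟨hav, hvb⟩ := hv
  rcases le_total x a with hxa | hax
  · rw [min_eq_right (hxa.trans (hav.trans hvb)), max_eq_left hxa]
    exact mul_nonneg (by linarith) (by linarith)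
  rcases le_total b x with hbx | hxb
  · rw [min_eq_left hbx, max_eq_right (hav.trans hvb)]
    exact mul_nonneg_of_nonpos_of_nonpos (by linarith) (by linarith)
  · rw [min_eq_right hxb, max_eq_right hax, sub_self, zero_mul]

namespace MeasureTheory.L2

variable {Ω : Type*} [MeasurableSpace Ω] {μ : Measure Ω}

theorem inner_nonneg_of_ae {f g : Lp ℝ 2 μ} (h : ∀ᵐ ω ∂μ, 0 ≤ f ω * g ω) : 0 ≤ ⟪f, g⟫ := by
  rw [inner_def]
  refine integral_nonneg_of_ae ?_
  filter_upwards [h] with ω hω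
  simpa [mul_comm] using hω

theorem inner_sup_inf_sub_nonneg {a b x v : Lp ℝ 2 μ} (hv : v ∈ Set.Icc a b) :
    0 ≤ ⟪a ⊔ (b ⊓ x) - x, v - a ⊔ (b ⊓ x)⟫ := by
  refine inner_nonneg_of_ae ?_
  filter_upwards [Lp.mem_Icc_iff_ae.mp hv, Lp.coeFn_sup a (b ⊓ x), Lp.coeFn_inf b x,
    Lp.coeFn_sub (a ⊔ (b ⊓ x)) x, Lp.coeFn_sub v (a ⊔ (b ⊓ x))] with ω hvω hsup hinf hsub hsub'
  rw [hsub, hsub', Pi.sub_apply, Pi.sub_apply, hsup, Pi.sup_apply, hinf, Pi.inf_apply]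
  exact mul_sub_max_min_nonneg hvω

end MeasureTheory.L2

section Tikhonov

variable {E F : Type*} [NormedAddCommGroup E] [InnerProductSpace ℝ E]
  [NormedAddCommGroup F] [InnerProductSpace ℝ F]

noncomputable def tikhonovCost (S : E →L[ℝ] F) (z : F) (α : ℝ) (v : E) : ℝ :=
  (1 / 2) * ‖S v - z‖ ^ 2 + (α / 2) * ‖v‖ ^ 2

theorem hasFDerivAt_tikhonovCost (S : E →L[ℝ] F) (z : F) (α : ℝ) (u : E) :
    HasFDerivAt (tikhonovCost S z α) ((innerSL ℝ (S u - z)).comp S + α • innerSL ℝ u) u := by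
  have hres : HasFDerivAt (fun v => S v - z) S u := S.hasFDerivAt.sub_const z
  refine ((hres.norm_sq.const_mul (1 / 2)).add
    ((hasFDerivAt_id u).norm_sq.const_mul (α / 2))).congr_fderiv ?_
  ext d
  simp only [add_apply, smul_apply, ContinuousLinearMap.comp_apply, coe_innerSL_apply, id_eq,
    ContinuousLinearMap.id_apply, nsmul_eq_mul, smul_eq_mul]
  ring

theorem IsMinOn.tikhonov_inner_nonneg {S : E →L[ℝ] F} {z : F} {α : ℝ} {K : Set E} {u v : E}
    (hmin : IsMinOn (tikhonovCost S z α) K u) (hK : Convex ℝ K) (hu : u ∈ K) (hv : v ∈ K) :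
    0 ≤ ⟪S u - z, S (v - u)⟫ + α * ⟪u, v - u⟫ :=
  hmin.localize.hasFDerivWithinAt_nonneg (hasFDerivAt_tikhonovCost S z α u).hasFDerivWithinAt
    (sub_mem_posTangentConeAt_of_segment_subset (hK.segment_subset hu hv))

theorem eq_of_inner_sub_nonneg {x y q : E} (hx : 0 ≤ ⟪x - q, y - x⟫) (hy : 0 ≤ ⟪y - q, x - y⟫) :
    x = y := by
  have : ⟪x - q, y - x⟫ + ⟪y - q, x - y⟫ = -‖x - y‖ ^ 2 := by
    rw [← neg_sub x y, inner_neg_right, neg_add_eq_sub, ← inner_sub_left,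
      sub_sub_sub_cancel_right, ← neg_sub x y, inner_neg_left, real_inner_self_eq_norm_sq]
  rw [← sub_eq_zero, ← norm_eq_zero]
  nlinarith [norm_nonneg (x - y)]

theorem inner_sub_adjoint_nonneg_iff [CompleteSpace E] [CompleteSpace F] {S : E →L[ℝ] F} {z : F}
    {α : ℝ} (hα : 0 < α) (u w x : E) :
    0 ≤ ⟪w - (-α⁻¹) • (ContinuousLinearMap.adjoint S (S u - z)), x⟫ ↔
      0 ≤ ⟪S u - z, S x⟫ + α * ⟪w, x⟫ := by
  have : α * ⟪w - (-α⁻¹) • (ContinuousLinearMap.adjoint S (S u - z)), x⟫ =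
      ⟪S u - z, S x⟫ + α * ⟪w, x⟫ := by
    rw [inner_sub_left, real_inner_smul_left, ContinuousLinearMap.adjoint_inner_left]
    field_simp
    ring
  rw [← this, mul_nonneg_iff_of_pos_left hα]

theorem norm_sub_le_of_tikhonov_inner_nonneg {S : E →L[ℝ] F} {z : F} {α : ℝ} (hα : 0 < α)
    {u u' p : E} (hu' : 0 ≤ ⟪S u' - z, S (p - u')⟫ + α * ⟪u', p - u'⟫)
    (hp : 0 ≤ ⟪S u - z, S (u' - p)⟫ + α * ⟪p, u' - p⟫) :
    ‖u' - u‖ ≤ (1 + ‖S‖ ^ 2 / α) * ‖p - u‖ := by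
  set d := u' - p
  set e := p - u
  have hsum : α * ‖d‖ ^ 2 ≤ -‖S d‖ ^ 2 - ⟪S e, S d⟫ := by
    have hpu' : p - u' = -d := (neg_sub u' p).symm
    have hSu' : S u' - z = S d + S e + (S u - z) := by
      simp only [d, e, map_sub]; abel
    have hu'p : u' = d + p := (sub_add_cancel u' p).symm
    rw [hpu', map_neg, inner_neg_right, inner_neg_right, hSu', hu'p] at hu'
    simp only [inner_add_left, real_inner_self_eq_norm_sq] at hu' hp
    linarith
  have hcross : -⟪S e, S d⟫ ≤ ‖S‖ ^ 2 * ‖e‖ * ‖d‖ := by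
    calc -⟪S e, S d⟫ ≤ ‖S e‖ * ‖S d‖ := (neg_le_abs _).trans (abs_real_inner_le_norm _ _)
      _ ≤ (‖S‖ * ‖e‖) * (‖S‖ * ‖d‖) := by gcongr <;> exact S.le_opNorm _
      _ = ‖S‖ ^ 2 * ‖e‖ * ‖d‖ := by ring
  have hd : ‖d‖ ≤ ‖S‖ ^ 2 / α * ‖e‖ := by
    rw [div_mul_eq_mul_div, le_div_iff₀ hα]
    rcases (norm_nonneg d).eq_or_lt with h0 | h0
    · rw [← h0, zero_mul]; positivity
    · nlinarith [sq_nonneg ‖S d‖]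
  calc ‖u' - u‖ = ‖d + e‖ := by rw [sub_add_sub_cancel]
    _ ≤ ‖d‖ + ‖e‖ := norm_add_le d e
    _ ≤ (1 + ‖S‖ ^ 2 / α) * ‖e‖ := by linarith

end Tikhonov

theorem stmt3_general
    {Ω : Type*} [MeasurableSpace Ω] (μ : Measure Ω)
    {H : Type*} [NormedAddCommGroup H] [InnerProductSpace ℝ H] [CompleteSpace H]
    (α : ℝ) (hα : 0 < α) (Sh : Lp ℝ 2 μ →L[ℝ] H) (z : H)
    (a b ah bh : Lp ℝ 2 μ)
    (hab : ∀ᵐ ω ∂μ, a ω ≤ b ω) (habh : ∀ᵐ ω ∂μ, ah ω ≤ bh ω)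
    (uh : Lp ℝ 2 μ)
    (huh_ad : ∀ᵐ ω ∂μ, a ω ≤ uh ω ∧ uh ω ≤ b ω)
    (huh_min : ∀ v : Lp ℝ 2 μ, (∀ᵐ ω ∂μ, a ω ≤ v ω ∧ v ω ≤ b ω) →
      (1 / 2) * ‖Sh uh - z‖ ^ 2 + (α / 2) * ‖uh‖ ^ 2 ≤
        (1 / 2) * ‖Sh v - z‖ ^ 2 + (α / 2) * ‖v‖ ^ 2)
    (uhh : Lp ℝ 2 μ)
    (huhh_ad : ∀ᵐ ω ∂μ, ah ω ≤ uhh ω ∧ uhh ω ≤ bh ω)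
    (huhh_min : ∀ v : Lp ℝ 2 μ, (∀ᵐ ω ∂μ, ah ω ≤ v ω ∧ v ω ≤ bh ω) →
      (1 / 2) * ‖Sh uhh - z‖ ^ 2 + (α / 2) * ‖uhh‖ ^ 2 ≤
        (1 / 2) * ‖Sh v - z‖ ^ 2 + (α / 2) * ‖v‖ ^ 2) :
    ‖uhh - uh‖ ≤ (1 + ‖Sh‖ ^ 2 / α) * (‖a - ah‖ + ‖b - bh‖) := by
  replace hab : a ≤ b := (Lp.coeFn_le a b).mp hab
  replace habh : ah ≤ bh := (Lp.coeFn_le ah bh).mp habh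
  rw [← Lp.mem_Icc_iff_ae] at huh_ad huhh_ad
  have huh_isMin : IsMinOn (tikhonovCost Sh z α) (Set.Icc a b) uh :=
    isMinOn_iff.mpr fun v hv => huh_min v (Lp.mem_Icc_iff_ae.mp hv)
  have huhh_isMin : IsMinOn (tikhonovCost Sh z α) (Set.Icc ah bh) uhh :=
    isMinOn_iff.mpr fun v hv => huhh_min v (Lp.mem_Icc_iff_ae.mp hv)
  set q := (-α⁻¹) • ContinuousLinearMap.adjoint Sh (Sh uh - z)
  have huh_eq : uh = a ⊔ (b ⊓ q) :=
    eq_of_inner_sub_nonneg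
      ((inner_sub_adjoint_nonneg_iff hα uh uh _).mpr <|
        huh_isMin.tikhonov_inner_nonneg (convex_Icc a b) huh_ad (sup_inf_mem_Icc hab q))
      (L2.inner_sup_inf_sub_nonneg huh_ad)
  calc ‖uhh - uh‖ ≤ (1 + ‖Sh‖ ^ 2 / α) * ‖ah ⊔ (bh ⊓ q) - uh‖ :=
        norm_sub_le_of_tikhonov_inner_nonneg hα
          (huhh_isMin.tikhonov_inner_nonneg (convex_Icc ah bh) huhh_ad (sup_inf_mem_Icc habh q))
          ((inner_sub_adjoint_nonneg_iff hα uh _ _).mp (L2.inner_sup_inf_sub_nonneg huhh_ad))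
    _ ≤ (1 + ‖Sh‖ ^ 2 / α) * (‖a - ah‖ + ‖b - bh‖) := by
        rw [norm_sub_rev a, norm_sub_rev b, huh_eq]
        gcongr
        exact norm_sup_inf_sub_sup_inf_le ah bh a b q

/-- Lemma 3.2 (Perturbed Bounds): stability of the variationally discretized
solution with respect to perturbations of the box constraints. -/
theorem stmt3
    {Ω : Type*} [MeasurableSpace Ω] (μ : Measure Ω) [IsFiniteMeasure μ]
    {H : Type*} [NormedAddCommGroup H] [InnerProductSpace ℝ H] [CompleteSpace H]
    (α : ℝ) (hα : 0 < α) (Sh : Lp ℝ 2 μ →L[ℝ] H) (z : H)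
    (a b ah bh : Lp ℝ 2 μ)
    (hab : ∀ᵐ ω ∂μ, a ω ≤ b ω) (habh : ∀ᵐ ω ∂μ, ah ω ≤ bh ω)
    (uh : Lp ℝ 2 μ)
    (huh_ad : ∀ᵐ ω ∂μ, a ω ≤ uh ω ∧ uh ω ≤ b ω)
    (huh_min : ∀ v : Lp ℝ 2 μ, (∀ᵐ ω ∂μ, a ω ≤ v ω ∧ v ω ≤ b ω) →
      (1 / 2) * ‖Sh uh - z‖ ^ 2 + (α / 2) * ‖uh‖ ^ 2 ≤
        (1 / 2) * ‖Sh v - z‖ ^ 2 + (α / 2) * ‖v‖ ^ 2)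
    (uhh : Lp ℝ 2 μ)
    (huhh_ad : ∀ᵐ ω ∂μ, ah ω ≤ uhh ω ∧ uhh ω ≤ bh ω)
    (huhh_min : ∀ v : Lp ℝ 2 μ, (∀ᵐ ω ∂μ, ah ω ≤ v ω ∧ v ω ≤ bh ω) →
      (1 / 2) * ‖Sh uhh - z‖ ^ 2 + (α / 2) * ‖uhh‖ ^ 2 ≤
        (1 / 2) * ‖Sh v - z‖ ^ 2 + (α / 2) * ‖v‖ ^ 2) :
    ‖uhh - uh‖ ≤ (1 + ‖Sh‖ ^ 2 / α) * (‖a - ah‖ + ‖b - bh‖) :=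
  stmt3_general μ α hα Sh z a b ah bh hab habh uh huh_ad huh_min uhh huhh_ad huhh_min
end

section
/- Under the assumptions of the previous statement, the operator I + (1/α) χ S_h* S_h (with χ an orthogonal projection and S_h* S_h positive semidefinite self-adjoint) is boundedly invertible, and its inverse satisfies ‖(I + (1/α) χ S_h* S_h)^{-1}‖ ≤ 1 + ‖S_h‖²/α. -/
/-!
With respect to `U = range χ ⊕ ker χ` the operator `1 + χ t`, `t = α⁻¹ Sₕ* Sₕ`, is block upper
triangular: its diagonal blocks are the compression `1 + χ t χ` and the identity, and its
off-diagonal block is `χ t (1 - χ)`. Since `χ t χ` is positive, `⟪(1 + χ t χ) v, v⟫ ≥ ‖v‖²`, so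
by Lax–Milgram the compression has an inverse `Q` of norm at most `1`. Back substitution gives
the inverse `Q (1 - χ t (1 - χ))`, of norm at most `1 + ‖t‖ = 1 + ‖Sₕ‖² / α`.
-/

open RealInnerProductSpace ContinuousLinearMap

section Ring
variable {M : Type*} [Ring M] {p t Q : M}

theorem IsIdempotentElem.inverse_one_add_mul_of_inverse_compression (hp : IsIdempotentElem p)
    (h₁ : (1 + p * t * p) * Q = 1) (h₂ : Q * (1 + p * t * p) = 1) :
    (1 + p * t) * (Q * (1 - p * t * (1 - p))) = 1 ∧
      Q * (1 - p * t * (1 - p)) * (1 + p * t) = 1 := by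
  set P := 1 + p * t * p
  set R := p * t * (1 - p)
  have hep : (1 - p) * p = 0 := hp.one_sub_mul_self
  have hPR : 1 + p * t = P + R := by simp only [P, R]; noncomm_ring
  have heP : (1 - p) * P = 1 - p := by
    simp only [P, mul_add, mul_one, ← mul_assoc, hep, zero_mul, add_zero]
  have heQ : (1 - p) * Q = 1 - p := by
    rw [← heP, mul_assoc, h₁, mul_one, heP]
  have hRe : R * (1 - p) = R := by simp only [R, mul_assoc, hp.one_sub.eq]
  have hRR : R * R = 0 := by
    simp only [R]
    rw [mul_assoc, ← mul_assoc (1 - p), ← mul_assoc (1 - p), hep]; simp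
  have hRQ : R * Q = R := by rw [← hRe, mul_assoc, heQ]
  have hRP : R * P = R := by rw [← hRe, mul_assoc, heP]
  rw [hPR]
  constructor
  · calc (P + R) * (Q * (1 - R)) = (P * Q + R * Q) * (1 - R) := by noncomm_ring
      _ = 1 := by rw [h₁, hRQ, add_mul, one_mul, mul_sub, mul_one, hRR]; noncomm_ring
  · calc Q * (1 - R) * (P + R) = Q * P + Q * (R - R * P - R * R) := by noncomm_ring
      _ = 1 := by rw [h₂, hRP, hRR]; simp

end Ring

theorem IsStarProjection.norm_mul_mul_one_sub_le {E : Type*} [NormedRing E] [StarRing E]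
    [CStarRing E] {p : E} (hp : IsStarProjection p) (t : E) : ‖p * t * (1 - p)‖ ≤ ‖t‖ :=
  calc ‖p * t * (1 - p)‖ ≤ ‖p‖ * ‖t‖ * ‖1 - p‖ := norm_mul₃_le
    _ ≤ 1 * ‖t‖ * 1 := by
      gcongr
      exacts [hp.norm_le, hp.one_sub.norm_le]
    _ = ‖t‖ := by ring

section Hilbert
variable {U : Type*} [NormedAddCommGroup U] [InnerProductSpace ℝ U]

theorem exists_inverse_norm_le_one_of_norm_sq_le_inner [CompleteSpace U] {P : U →L[ℝ] U}
    (hP : ∀ v, ‖v‖ ^ 2 ≤ ⟪P v, v⟫) : ∃ Q : U →L[ℝ] U, P * Q = 1 ∧ Q * P = 1 ∧ ‖Q‖ ≤ 1 := by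
  have hcoer : IsCoercive ((innerSL ℝ).comp P) := ⟨1, one_pos, fun v => by simpa [sq] using hP v⟩
  set E := hcoer.continuousLinearEquivOfBilin
  have hE : (E : U →L[ℝ] U) = P := by
    ext v
    refine ext_inner_right ℝ fun w => ?_
    rw [ContinuousLinearEquiv.coe_coe, hcoer.continuousLinearEquivOfBilin_apply]
    rfl
  refine ⟨E.symm, ?_, ?_, opNorm_le_bound _ zero_le_one fun g => ?_⟩
  · rw [← hE]; ext v; simp
  · rw [← hE]; ext v; simp
  change ‖E.symm g‖ ≤ 1 * ‖g‖
  set w := E.symm g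
  have : ‖w‖ ^ 2 ≤ ‖g‖ * ‖w‖ :=
    calc ‖w‖ ^ 2 ≤ ⟪P w, w⟫ := hP w
      _ = ⟪g, w⟫ := by rw [← hE]; simp [w]
      _ ≤ ‖g‖ * ‖w‖ := real_inner_le_norm _ _
  nlinarith [norm_nonneg w, norm_nonneg g]

theorem ContinuousLinearMap.IsPositive.norm_sq_le_inner_one_add {K : U →L[ℝ] U}
    (hK : K.IsPositive) (v : U) :
    ‖v‖ ^ 2 ≤ ⟪(1 + K) v, v⟫ := by
  rw [add_apply, inner_add_left, one_apply_eq_self, real_inner_self_eq_norm_sq]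
  linarith [hK.inner_nonneg_left v]

end Hilbert

/-- Uniform bounded invertibility of the semismooth Newton Jacobians
`M = I + (1/α) χ Sₕ* Sₕ`. -/
theorem stmt7
    {U H : Type*} [NormedAddCommGroup U] [InnerProductSpace ℝ U] [CompleteSpace U]
    [NormedAddCommGroup H] [InnerProductSpace ℝ H] [CompleteSpace H]
    (α : ℝ) (hα : 0 < α) (Sh : U →L[ℝ] H)
    (χ : U →L[ℝ] U) (hχsa : IsSelfAdjoint χ) (hχidem : χ ∘L χ = χ)
    (A : U →L[ℝ] U)
    (hA : A = ContinuousLinearMap.id ℝ U + (1 / α) • (χ ∘L (Sh.adjoint ∘L Sh))) :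
    ∃ B : U →L[ℝ] U,
      A ∘L B = ContinuousLinearMap.id ℝ U ∧
      B ∘L A = ContinuousLinearMap.id ℝ U ∧
      ‖B‖ ≤ 1 + ‖Sh‖ ^ 2 / α := by
  have hχ : IsStarProjection χ := ⟨hχidem, hχsa⟩
  set t : U →L[ℝ] U := (1 / α) • (Sh.adjoint ∘L Sh)
  have hA' : A = 1 + χ * t := by rw [hA]; ext v; simp [t]
  have hpos : (χ * t * χ).IsPositive := by
    have := (isPositive_adjoint_comp_self (Sh ∘L χ)).smul_of_nonneg (one_div_pos.2 hα).le
    convert this using 1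
    ext v
    simp [t, adjoint_comp, hχsa.adjoint_eq]
  obtain ⟨Q, hPQ, hQP, hQ⟩ :=
    exists_inverse_norm_le_one_of_norm_sq_le_inner hpos.norm_sq_le_inner_one_add
  obtain ⟨hAB, hBA⟩ := hχ.isIdempotentElem.inverse_one_add_mul_of_inverse_compression hPQ hQP
  refine ⟨Q * (1 - χ * t * (1 - χ)), by rw [hA']; exact hAB, by rw [hA']; exact hBA, ?_⟩
  calc ‖Q * (1 - χ * t * (1 - χ))‖ ≤ 1 * (1 + ‖t‖) := by
        refine norm_mul_le_of_le hQ ((norm_sub_le _ _).trans ?_)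
        gcongr
        exacts [norm_id_le, hχ.norm_mul_mul_one_sub_le t]
    _ = 1 + ‖Sh‖ ^ 2 / α := by
        rw [one_mul, norm_smul, norm_adjoint_comp_self, Real.norm_of_nonneg (one_div_pos.2 hα).le]
        ring
end

section
/- Let Ω have finite measure, α > 0, a, b ∈ L^∞(Ω) with a ≤ b, S_h : L²(Ω) → L²(Ω) bounded linear, z ∈ L²(Ω). Let ū_h be the minimizer of (1/2)‖S_h v − z‖² + (α/2)‖v‖² over U_ad = {v : a ≤ v ≤ b a.e.}. Then for any admissible v ∈ U_ad, ‖v − ū_h‖_{L²} ≤ (1/α)‖ζ‖_{L²}, where p_h(v) = S_h*(S_h v − z) and ζ(ω) equals [α v + p_h(v)]_− where v(ω) = a(ω), [α v + p_h(v)]_+ where v(ω) = b(ω), and α v + p_h(v) elsewhere. -/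
/-!
`ū_h` minimizes the strongly convex functional `J w = ½‖S_h w - z‖² + (α/2)‖w‖²` over the convex
set `U_ad`, so first-order optimality gives `0 ≤ ⟪∇J ū_h, v - ū_h⟫` with
`∇J w = α w + S_h*(S_h w - z)`. On the active sets the sign of `ζ` is chosen so that pointwise
`(∇J v - ζ)(v - ū_h) ≤ 0`. Since `∇J` is `α`-strongly monotone,
`α ‖v - ū_h‖² ≤ ⟪∇J v - ∇J ū_h, v - ū_h⟫ ≤ ⟪ζ, v - ū_h⟫ ≤ ‖ζ‖ ‖v - ū_h‖`.
-/

open RealInnerProductSpace MeasureTheory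

section InnerProductSpace

variable {E : Type*} [NormedAddCommGroup E] [InnerProductSpace ℝ E]

theorem norm_sub_le_of_strongly_monotone {g : E → E} {α : ℝ} (hα : 0 < α)
    (hg : ∀ x y, α * ‖x - y‖ ^ 2 ≤ ⟪g x - g y, x - y⟫) {u v ζ : E}
    (hu : 0 ≤ ⟪g u, v - u⟫) (hζ : ⟪g v - ζ, v - u⟫ ≤ 0) :
    ‖v - u‖ ≤ (1 / α) * ‖ζ‖ := by
  have key : α * ‖v - u‖ ^ 2 ≤ ‖ζ‖ * ‖v - u‖ :=
    calc α * ‖v - u‖ ^ 2 ≤ ⟪g v - g u, v - u⟫ := hg v u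
      _ ≤ ⟪ζ, v - u⟫ := by rw [inner_sub_left] at hζ ⊢; linarith
      _ ≤ ‖ζ‖ * ‖v - u‖ := real_inner_le_norm ζ (v - u)
  rw [one_div_mul_eq_div, le_div_iff₀ hα]
  rcases (norm_nonneg (v - u)).eq_or_lt with h | h
  · rw [← h]; simp
  · nlinarith

variable [CompleteSpace E]

theorem Convex.inner_gradient_sub_nonneg_of_isMinOn {f : E → ℝ} {s : Set E} {u v g : E}
    (hs : Convex ℝ s) (hf : HasGradientAt f g u) (hmin : IsMinOn f s u) (hu : u ∈ s)
    (hv : v ∈ s) : 0 ≤ ⟪g, v - u⟫ :=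
  hmin.localize.hasFDerivWithinAt_nonneg hf.hasFDerivAt.hasFDerivWithinAt
    (sub_mem_posTangentConeAt_of_segment_subset (hs.segment_subset hu hv))

variable {F : Type*} [NormedAddCommGroup F] [InnerProductSpace ℝ F] [CompleteSpace F]

theorem hasGradientAt_tikhonov (S : E →L[ℝ] F) (z : F) (α : ℝ) (u : E) :
    HasGradientAt (fun w ↦ 1 / 2 * ‖S w - z‖ ^ 2 + α / 2 * ‖w‖ ^ 2)
      (α • u + S.adjoint (S u - z)) u := by
  rw [hasGradientAt_iff_hasFDerivAt]
  refine (((S.hasFDerivAt.sub_const z).norm_sq.const_mul (1 / 2)).add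
    ((hasFDerivAt_id u).norm_sq.const_mul (α / 2))).congr_fderiv ?_
  ext y
  simp [ContinuousLinearMap.adjoint_inner_left]
  ring

theorem inner_tikhonov_gradient_sub (S : E →L[ℝ] F) (z : F) (α : ℝ) (x y : E) :
    ⟪(α • x + S.adjoint (S x - z)) - (α • y + S.adjoint (S y - z)), x - y⟫ =
      α * ‖x - y‖ ^ 2 + ‖S (x - y)‖ ^ 2 := by
  rw [add_sub_add_comm, ← smul_sub, ← map_sub, sub_sub_sub_cancel_right, ← map_sub,
    inner_add_left, real_inner_smul_left, ContinuousLinearMap.adjoint_inner_left,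
    real_inner_self_eq_norm_sq, real_inner_self_eq_norm_sq]

end InnerProductSpace

/-- The paper's `ζ` at a point: the residual `g = α v + p_h(v)`, with only its sign-admissible
part kept where `v` sits on the lower or upper bound. -/
noncomputable def boxResidual (a b v g : ℝ) : ℝ :=
  if v = a then min g 0 else if v = b then max g 0 else g

theorem sub_boxResidual_mul_sub_nonpos {a b u v g : ℝ} (hau : a ≤ u) (hub : u ≤ b) :
    (g - boxResidual a b v g) * (v - u) ≤ 0 := by
  unfold boxResidual
  split_ifs
  · exact mul_nonpos_of_nonneg_of_nonpos (sub_nonneg.2 (min_le_left _ _)) (by linarith)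
  · exact mul_nonpos_of_nonpos_of_nonneg (sub_nonpos.2 (le_max_left _ _)) (by linarith)
  · simp

namespace MeasureTheory

variable {Ω : Type*} [MeasurableSpace Ω] {μ : Measure Ω}

theorem Lp.convex_setOf_ae_mem {E : Type*} [NormedAddCommGroup E] [NormedSpace ℝ E]
    {p : ENNReal} {C : Ω → Set E} (hC : ∀ ω, Convex ℝ (C ω)) :
    Convex ℝ {f : Lp E p μ | ∀ᵐ ω ∂μ, f ω ∈ C ω} := by
  intro f hf g hg s t hs ht hst
  filter_upwards [hf, hg, Lp.coeFn_add (s • f) (t • g), Lp.coeFn_smul s f, Lp.coeFn_smul t g]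
    with ω hfω hgω hadd hsf htg
  rw [hadd, Pi.add_apply, hsf, htg]
  exact hC ω hfω hgω hs ht hst

theorem L2.inner_nonpos_of_ae {f g : Lp ℝ 2 μ} (h : ∀ᵐ ω ∂μ, f ω * g ω ≤ 0) : ⟪f, g⟫ ≤ 0 := by
  rw [L2.inner_def]
  refine integral_nonpos_of_ae ?_
  filter_upwards [h] with ω hω
  simpa [mul_comm] using hω

theorem L2.inner_sub_boxResidual_sub_nonpos {a b : Ω → ℝ} {q ζ u v : Lp ℝ 2 μ}
    (hu : ∀ᵐ ω ∂μ, a ω ≤ u ω ∧ u ω ≤ b ω)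
    (hζ : ∀ᵐ ω ∂μ, ζ ω = boxResidual (a ω) (b ω) (v ω) (q ω)) : ⟪q - ζ, v - u⟫ ≤ 0 := by
  refine L2.inner_nonpos_of_ae ?_
  filter_upwards [hu, hζ, Lp.coeFn_sub q ζ, Lp.coeFn_sub v u] with ω huω hζω hqζ hvu
  rw [hqζ, hvu, Pi.sub_apply, Pi.sub_apply, hζω]
  exact sub_boxResidual_mul_sub_nonpos huω.1 huω.2

end MeasureTheory

theorem stmt11_general
    {Ω : Type*} [MeasurableSpace Ω] (μ : Measure Ω)
    (α : ℝ) (hα : 0 < α)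
    (Sh : Lp ℝ 2 μ →L[ℝ] Lp ℝ 2 μ) (z : Lp ℝ 2 μ)
    (a b : Ω → ℝ)
    (ubar : Lp ℝ 2 μ)
    (hubar_ad : ∀ᵐ ω ∂μ, a ω ≤ ubar ω ∧ ubar ω ≤ b ω)
    (hubar_min : ∀ w : Lp ℝ 2 μ, (∀ᵐ ω ∂μ, a ω ≤ w ω ∧ w ω ≤ b ω) →
      (1 / 2) * ‖Sh ubar - z‖ ^ 2 + (α / 2) * ‖ubar‖ ^ 2 ≤
        (1 / 2) * ‖Sh w - z‖ ^ 2 + (α / 2) * ‖w‖ ^ 2)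
    (v : Lp ℝ 2 μ) (hv_ad : ∀ᵐ ω ∂μ, a ω ≤ v ω ∧ v ω ≤ b ω)
    (p : Lp ℝ 2 μ) (hp : p = Sh.adjoint (Sh v - z))
    (ζ : Lp ℝ 2 μ)
    (hζ : ∀ᵐ ω ∂μ, ζ ω =
      if v ω = a ω then min (α * v ω + p ω) 0
      else if v ω = b ω then max (α * v ω + p ω) 0
      else α * v ω + p ω) :
    ‖v - ubar‖ ≤ (1 / α) * ‖ζ‖ := by
  set grad : Lp ℝ 2 μ → Lp ℝ 2 μ := fun w ↦ α • w + Sh.adjoint (Sh w - z)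
  have hconvex : Convex ℝ {w : Lp ℝ 2 μ | ∀ᵐ ω ∂μ, w ω ∈ Set.Icc (a ω) (b ω)} :=
    Lp.convex_setOf_ae_mem fun ω ↦ convex_Icc (a ω) (b ω)
  have hVI : 0 ≤ ⟪grad ubar, v - ubar⟫ := hconvex.inner_gradient_sub_nonneg_of_isMinOn
    (hasGradientAt_tikhonov Sh z α ubar) hubar_min hubar_ad hv_ad
  have hstrong : ∀ x y, α * ‖x - y‖ ^ 2 ≤ ⟪grad x - grad y, x - y⟫ := fun x y ↦ by
    rw [inner_tikhonov_gradient_sub]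
    exact le_add_of_nonneg_right (sq_nonneg _)
  have hζ' : ∀ᵐ ω ∂μ, ζ ω = boxResidual (a ω) (b ω) (v ω) (grad v ω) := by
    filter_upwards [hζ, Lp.coeFn_add (α • v) p, Lp.coeFn_smul α v] with ω hζω hadd hsmul
    have hgrad_v : grad v = α • v + p := by rw [hp]
    rw [hζω, hgrad_v, hadd, Pi.add_apply, hsmul]
    rfl
  exact norm_sub_le_of_strongly_monotone hα hstrong hVI
    (L2.inner_sub_boxResidual_sub_nonpos hubar_ad hζ')

/-- A posteriori error bound (Krumbiegel–Rösch) used as stopping criterion: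
`‖v - ūₕ‖ ≤ (1/α)‖ζ‖` for any admissible `v`. -/
theorem stmt11
    {Ω : Type*} [MeasurableSpace Ω] (μ : Measure Ω) [IsFiniteMeasure μ]
    (α : ℝ) (hα : 0 < α)
    (Sh : Lp ℝ 2 μ →L[ℝ] Lp ℝ 2 μ) (z : Lp ℝ 2 μ)
    (a b : Ω → ℝ) (hab : ∀ᵐ ω ∂μ, a ω ≤ b ω)
    (ubar : Lp ℝ 2 μ)
    (hubar_ad : ∀ᵐ ω ∂μ, a ω ≤ ubar ω ∧ ubar ω ≤ b ω)
    (hubar_min : ∀ w : Lp ℝ 2 μ, (∀ᵐ ω ∂μ, a ω ≤ w ω ∧ w ω ≤ b ω) →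
      (1 / 2) * ‖Sh ubar - z‖ ^ 2 + (α / 2) * ‖ubar‖ ^ 2 ≤
        (1 / 2) * ‖Sh w - z‖ ^ 2 + (α / 2) * ‖w‖ ^ 2)
    (v : Lp ℝ 2 μ) (hv_ad : ∀ᵐ ω ∂μ, a ω ≤ v ω ∧ v ω ≤ b ω)
    (p : Lp ℝ 2 μ) (hp : p = Sh.adjoint (Sh v - z))
    (ζ : Lp ℝ 2 μ)
    (hζ : ∀ᵐ ω ∂μ, ζ ω =
      if v ω = a ω then min (α * v ω + p ω) 0
      else if v ω = b ω then max (α * v ω + p ω) 0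
      else α * v ω + p ω) :
    ‖v - ubar‖ ≤ (1 / α) * ‖ζ‖ :=
  stmt11_general μ α hα Sh z a b ubar hubar_ad hubar_min v hv_ad p hp ζ hζ
end
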